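/- arXiv:1503.01943 — 7 statements merged into one kernel-verified Lean document; each statement's English description precedes it below -/
import Mathlib

section
/- Let η̃ > 0 and fix η' ∈ (0, 2η̃). Then there exists a constant C > 0, depending only on η', with the following property: for every closed axis-parallel square B_Y ⊆ ℝ² of side length L > 0 (so that diam(B_Y) = √2·L), every set D_X ⊆ ℝ² with dist(B_Y, D_X) ≥ η̃·√2·L, and every integer r ≥ 1, there exist functions g_{1,1},…,g_{1,r} : ℝ² → ℝ and g_{2,1},…,g_{2,r} : ℝ² → ℝ such that for all x ∈ D_X and all y ∈ B_Y one has |−(1/(2π))·log‖x−y‖ − Σ_{i=1}^{r} g_{1,i}(x)·g_{2,i}(y)| ≤ C·(1 + 1/η̃)·(1+η')^{−r^{1/2}}. -/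
/-!
Cut the square into an `n × n` grid with `n ≈ 4 / η'`, so that every cell is at most half as
wide as its distance to `D_X`. On a cell containing a point `c`, identify `ℝ²` with `ℂ` and
write `a = x - c`, `b = y - c`: then `log ‖x - y‖ = log ‖a‖ + Re log (1 - b / a)` with
`‖b / a‖ ≤ 1 / 2`, and truncating the Taylor series of `log (1 - w)` after `m` terms gives a
separable approximation of rank `2m + 1` with error `2⁻ᵐ`. Gluing the cells costs a factor
`(n + 1)²` in the rank, so rank `r` buys `m ≈ r / (3 (n + 1)²)`, and `2⁻ᵐ ≤ C (1 + η')^(-√r)`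
because a Gaussian in `√r` beats any exponential. For `r` too small to afford one term per cell,
the rank-one approximation `log ‖x - a‖` is off by at most `1 / η̃`, since `log` is
`1 / d`-Lipschitz on `[d, ∞)`.
-/

open Real Metric

/-- The closed axis-parallel square in `ℝ²` with lower corner `a` and side length `L`. -/
def square2 (a : EuclideanSpace ℝ (Fin 2)) (L : ℝ) : Set (EuclideanSpace ℝ (Fin 2)) :=
  {y | ∀ i : Fin 2, a i ≤ y i ∧ y i ≤ a i + L}

section SeparableApprox

variable {α β : Type*} {k : α → β → ℝ} {X : Set α} {Y : Set β} {r : ℕ} {ε : ℝ}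

def HasSeparableApprox (k : α → β → ℝ) (X : Set α) (Y : Set β) (r : ℕ) (ε : ℝ) : Prop :=
  ∃ g₁ : Fin r → α → ℝ, ∃ g₂ : Fin r → β → ℝ,
    ∀ x ∈ X, ∀ y ∈ Y, |k x y - ∑ i, g₁ i x * g₂ i y| ≤ ε

theorem hasSeparableApprox_of_sum {ι : Type*} [Fintype ι] (u : ι → α → ℝ) (v : ι → β → ℝ)
    (hr : Fintype.card ι ≤ r) (h : ∀ x ∈ X, ∀ y ∈ Y, |k x y - ∑ i, u i x * v i y| ≤ ε) :
    HasSeparableApprox k X Y r ε := by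
  obtain ⟨t, rfl⟩ := Nat.exists_eq_add_of_le hr
  let e := (Fintype.equivFin ι).symm
  refine ⟨Fin.append (u ∘ e) 0, Fin.append (v ∘ e) 0, fun x hx y hy => ?_⟩
  simpa [Fin.sum_univ_add, e.sum_comp fun i => u i x * v i y] using h x hx y hy

theorem HasSeparableApprox.mono {r' : ℕ} {ε' : ℝ} (h : HasSeparableApprox k X Y r ε)
    (hr : r ≤ r') (hε : ε ≤ ε') : HasSeparableApprox k X Y r' ε' :=
  let ⟨g₁, g₂, hg⟩ := h
  hasSeparableApprox_of_sum g₁ g₂ (by simpa using hr) fun x hx y hy => (hg x hx y hy).trans hε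

theorem HasSeparableApprox.of_cover {ι : Type*} (s : Finset ι) (cell : β → ι)
    (hcell : ∀ y ∈ Y, cell y ∈ s) (h : ∀ i, HasSeparableApprox k X {y ∈ Y | cell y = i} r ε) :
    HasSeparableApprox k X Y (s.card * r) ε := by
  classical
  choose g₁ g₂ hg using h
  refine hasSeparableApprox_of_sum (ι := s × Fin r) (fun p x => g₁ p.1 p.2 x)
    (fun p y => if cell y = p.1 then g₂ p.1 p.2 y else 0) (by simp) fun x hx y hy => ?_
  have hsum : ∑ p : s × Fin r, g₁ p.1 p.2 x * (if cell y = p.1 then g₂ p.1 p.2 y else 0) =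
      ∑ j, g₁ (cell y) j x * g₂ (cell y) j y := by
    simp only [mul_ite, mul_zero, Fintype.sum_prod_type]
    refine Finset.sum_comm.trans (Finset.sum_congr rfl fun j _ => ?_)
    rw [Finset.sum_coe_sort s fun i => if cell y = i then g₁ i j x * g₂ i j y else 0,
      Finset.sum_ite_eq s, if_pos (hcell y hy)]
  rw [hsum]
  exact hg _ x hx y ⟨hy, rfl⟩

end SeparableApprox

theorem abs_log_sub_log_le_div {A B d : ℝ} (hd : 0 < d) (hA : d ≤ A) (hB : d ≤ B) :
    |log A - log B| ≤ |A - B| / d := by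
  have key {A B : ℝ} (hA : d ≤ A) (hB : d ≤ B) : log A - log B ≤ |A - B| / d := by
    have hA0 : 0 < A := hd.trans_le hA
    have hB0 : 0 < B := hd.trans_le hB
    calc log A - log B = log (A / B) := (log_div hA0.ne' hB0.ne').symm
      _ ≤ A / B - 1 := log_le_sub_one_of_pos (div_pos hA0 hB0)
      _ = (A - B) / B := by field_simp
      _ ≤ |A - B| / d := div_le_div₀ (abs_nonneg _) (le_abs_self _) hd hB
  refine abs_le.mpr ⟨?_, key hA hB⟩
  have := key hB hA
  rw [abs_sub_comm] at this
  linarith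

theorem norm_log_one_sub_add_sum_le {w : ℂ} (hw : ‖w‖ ≤ 1 / 2) (m : ℕ) :
    ‖Complex.log (1 - w) + ∑ s ∈ Finset.range m, w ^ (s + 1) / (s + 1)‖ ≤ (1 / 2) ^ m := by
  have htaylor : Complex.logTaylor (m + 1) (-w) =
      -∑ s ∈ Finset.range m, w ^ (s + 1) / (s + 1) := by
    rw [Complex.logTaylor, Finset.sum_range_succ', Nat.cast_zero, div_zero, add_zero,
      ← Finset.sum_neg_distrib]
    refine Finset.sum_congr rfl fun (j : ℕ) _ => ?_
    rw [neg_pow w, ← mul_assoc, ← pow_add, Odd.neg_one_pow ⟨j + 1, by ring⟩]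
    push_cast
    ring
  have h := Complex.norm_log_sub_logTaylor_le m (z := -w) (by rw [norm_neg]; linarith)
  rw [htaylor, sub_neg_eq_add, ← sub_eq_add_neg, norm_neg] at h
  refine h.trans ?_
  calc ‖w‖ ^ (m + 1) * (1 - ‖w‖)⁻¹ / (m + 1) ≤ (1 / 2) ^ (m + 1) * 2 / 1 := by
        gcongr
        · exact inv_nonneg.mpr (by linarith)
        · rw [inv_le_comm₀ (by linarith) (by norm_num)]
          linarith
        · linarith
    _ = (1 / 2) ^ m := by ring

theorem abs_log_norm_sub_sub_log_norm_add_sum_le {a b : ℂ} (hab : 2 * ‖b‖ ≤ ‖a‖) (m : ℕ) :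
    |log ‖a - b‖ - log ‖a‖ + ∑ s ∈ Finset.range m, ((b / a) ^ (s + 1)).re / (s + 1)| ≤
      (1 / 2) ^ m := by
  rcases eq_or_ne a 0 with rfl | ha
  · obtain rfl : b = 0 := norm_le_zero_iff.mp (by simp at hab; linarith [norm_nonneg b])
    simp
  have hw : ‖b / a‖ ≤ 1 / 2 := by
    rw [norm_div, div_le_iff₀ (norm_pos_iff.mpr ha)]
    linarith
  have hw1 : 1 - b / a ≠ 0 := fun h => by
    rw [← eq_of_sub_eq_zero h, norm_one] at hw
    norm_num at hw
  calc |log ‖a - b‖ - log ‖a‖ + ∑ s ∈ Finset.range m, ((b / a) ^ (s + 1)).re / (s + 1)|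
      = |(Complex.log (1 - b / a) + ∑ s ∈ Finset.range m, (b / a) ^ (s + 1) / (s + 1)).re| := by
        rw [show a - b = a * (1 - b / a) by field_simp, norm_mul,
          log_mul (norm_ne_zero_iff.mpr ha) (norm_ne_zero_iff.mpr hw1), Complex.add_re,
          Complex.log_re, Complex.re_sum]
        congr 2
        · ring
        · refine Finset.sum_congr rfl fun s _ => ?_
          exact_mod_cast (Complex.div_natCast_re _ (s + 1)).symm
    _ ≤ ‖Complex.log (1 - b / a) + ∑ s ∈ Finset.range m, (b / a) ^ (s + 1) / (s + 1)‖ :=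
        Complex.abs_re_le_norm _
    _ ≤ (1 / 2) ^ m := norm_log_one_sub_add_sum_le hw m

section LogKernel

variable {E : Type*} [NormedAddCommGroup E]

noncomputable def logKernel (x y : E) : ℝ := -(1 / (2 * π)) * log ‖x - y‖

theorem abs_neg_one_div_two_pi_mul_le (t : ℝ) : |-(1 / (2 * π)) * t| ≤ |t| := by
  rw [abs_mul, abs_neg, abs_of_pos (by positivity)]
  exact mul_le_of_le_one_left (abs_nonneg t)
    ((div_le_one (by positivity)).mpr (by linarith [pi_gt_three]))

theorem hasSeparableApprox_logKernel_rankOne {X Y : Set E} {c : E} {ρ d : ℝ} (hc : c ∈ Y)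
    (hd : 0 < d) (hXY : ∀ x ∈ X, ∀ y ∈ Y, d ≤ ‖x - y‖) (hρ : ∀ y ∈ Y, ‖y - c‖ ≤ ρ) :
    HasSeparableApprox logKernel X Y 1 (ρ / d) := by
  refine hasSeparableApprox_of_sum (ι := Unit) (fun _ x => logKernel x c) (fun _ _ => 1) le_rfl
    fun x hx y hy => ?_
  calc |logKernel x y - ∑ _ : Unit, logKernel x c * 1|
      = |-(1 / (2 * π)) * (log ‖x - y‖ - log ‖x - c‖)| := by
        rw [Finset.univ_unique, Finset.sum_singleton, mul_one, logKernel, logKernel, ← mul_sub]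
    _ ≤ |log ‖x - y‖ - log ‖x - c‖| := abs_neg_one_div_two_pi_mul_le _
    _ ≤ |‖x - y‖ - ‖x - c‖| / d := abs_log_sub_log_le_div hd (hXY x hx y hy) (hXY x hx c hc)
    _ ≤ ρ / d := by
        gcongr
        calc |‖x - y‖ - ‖x - c‖| ≤ ‖(x - y) - (x - c)‖ := abs_norm_sub_norm_le _ _
          _ = ‖y - c‖ := by rw [sub_sub_sub_cancel_left, norm_sub_rev]
          _ ≤ ρ := hρ y hy

theorem hasSeparableApprox_logKernel_of_two_mul_norm_le [NormedSpace ℝ E] (e : E ≃ₗᵢ[ℝ] ℂ)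
    {X Y : Set E} (c : E) (hXY : ∀ x ∈ X, ∀ y ∈ Y, 2 * ‖y - c‖ ≤ ‖x - c‖) (m : ℕ) :
    HasSeparableApprox logKernel X Y (2 * m + 1) ((1 / 2) ^ m) := by
  let A : E → ℕ → ℂ := fun x s => (e (x - c))⁻¹ ^ (s + 1)
  let B : E → ℕ → ℂ := fun y s => e (y - c) ^ (s + 1)
  -- `none` indexes the monopole term `logKernel x c`, and `some (s, j)` the real (`j = 0`) and
  -- imaginary (`j = 1`) parts of the multipole term of order `s + 1`.
  refine hasSeparableApprox_of_sum (ι := Option (Fin m × Fin 2))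
    (fun i x => i.elim (logKernel x c) fun p =>
      ![(A x p.1).re, -(A x p.1).im] p.2 / (2 * π * (p.1 + 1)))
    (fun i y => i.elim 1 fun p => ![(B y p.1).re, (B y p.1).im] p.2)
    (by simp [mul_comm]) fun x hx y hy => ?_
  set w := e (y - c) / e (x - c)
  have hmode (s : ℕ) : (A x s).re * (B y s).re + -(A x s).im * (B y s).im = (w ^ (s + 1)).re := by
    rw [div_pow, div_eq_inv_mul, ← inv_pow, Complex.mul_re]
    ring
  have hsum : ∑ i : Option (Fin m × Fin 2), i.elim (logKernel x c) (fun p =>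
        ![(A x p.1).re, -(A x p.1).im] p.2 / (2 * π * (p.1 + 1))) *
        i.elim 1 (fun p => ![(B y p.1).re, (B y p.1).im] p.2) =
      logKernel x c + 1 / (2 * π) * ∑ s ∈ Finset.range m, (w ^ (s + 1)).re / (s + 1) := by
    simp only [Fintype.sum_option, Option.elim, mul_one, Fintype.sum_prod_type, Fin.sum_univ_two,
      Matrix.cons_val_zero, Matrix.cons_val_one]
    rw [Finset.mul_sum,
      ← Fin.sum_univ_eq_sum_range fun s => 1 / (2 * π) * ((w ^ (s + 1)).re / (s + 1))]
    refine congrArg _ (Finset.sum_congr rfl fun s _ => ?_)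
    rw [← hmode]
    field_simp
  have hnorm : ‖e (x - c) - e (y - c)‖ = ‖x - y‖ := by
    rw [← map_sub, LinearIsometryEquiv.norm_map, sub_sub_sub_cancel_right]
  calc _ = |-(1 / (2 * π)) * (log ‖e (x - c) - e (y - c)‖ - log ‖e (x - c)‖ +
        ∑ s ∈ Finset.range m, (w ^ (s + 1)).re / (s + 1))| := by
        rw [hsum, hnorm, LinearIsometryEquiv.norm_map, logKernel, logKernel]
        ring_nf
    _ ≤ _ := abs_neg_one_div_two_pi_mul_le _
    _ ≤ (1 / 2) ^ m := abs_log_norm_sub_sub_log_norm_add_sum_le (by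
        simpa only [LinearIsometryEquiv.norm_map] using hXY x hx y hy) m

end LogKernel

theorem norm_le_sqrt_card_mul_of_abs_le {ι : Type*} [Fintype ι] {v : EuclideanSpace ℝ ι}
    {b : ℝ} (hb : 0 ≤ b) (h : ∀ i, |v i| ≤ b) : ‖v‖ ≤ √(Fintype.card ι) * b := by
  rw [EuclideanSpace.norm_eq, ← sqrt_sq hb, ← sqrt_mul (Nat.cast_nonneg _)]
  gcongr
  calc ∑ i, ‖v i‖ ^ 2 ≤ ∑ _ : ι, b ^ 2 := Finset.sum_le_sum fun i _ => by
        rw [norm_eq_abs]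
        exact pow_le_pow_left₀ (abs_nonneg _) (h i) 2
    _ = Fintype.card ι * b ^ 2 := by simp

section Square

variable {X : Set (EuclideanSpace ℝ (Fin 2))} {a y y' : EuclideanSpace ℝ (Fin 2)} {L : ℝ} {n : ℕ}

theorem mem_square2_self (hL : 0 ≤ L) : a ∈ square2 a L := fun _ => ⟨le_rfl, by linarith⟩

theorem norm_sub_le_of_mem_square2 (hy : y ∈ square2 a L) : ‖y - a‖ ≤ √2 * L := by
  have hL : 0 ≤ L := by linarith [hy 0]
  simpa using norm_le_sqrt_card_mul_of_abs_le (v := y - a) hL fun i => by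
    rw [PiLp.sub_apply, abs_le]
    constructor <;> linarith [hy i]

/-- Points on the upper edges of `square2 a L` get the extra index `n`, so the grid has
`(n + 1)²` cells. -/
noncomputable def gridCell (a : EuclideanSpace ℝ (Fin 2)) (L : ℝ) (n : ℕ)
    (y : EuclideanSpace ℝ (Fin 2)) : Fin 2 → ℤ :=
  fun i => ⌊(y i - a i) * n / L⌋

theorem gridCell_mem (hL : 0 < L) (hy : y ∈ square2 a L) :
    gridCell a L n y ∈ Fintype.piFinset fun _ => Finset.Icc 0 (n : ℤ) := by
  refine Fintype.mem_piFinset.mpr fun i => Finset.mem_Icc.mpr ⟨?_, ?_⟩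
  · exact Int.floor_nonneg.mpr (by have := (hy i).1; positivity)
  · refine (Int.floor_mono ?_).trans (Int.floor_natCast n).le
    rw [div_le_iff₀ hL]
    nlinarith [hy i, Nat.cast_nonneg (α := ℝ) n]

theorem norm_sub_le_of_gridCell_eq (hL : 0 < L) (hn : 0 < n)
    (h : gridCell a L n y = gridCell a L n y') : ‖y - y'‖ ≤ √2 * (L / n) := by
  have hn' : (0 : ℝ) < n := Nat.cast_pos.mpr hn
  simpa using norm_le_sqrt_card_mul_of_abs_le (v := y - y') (by positivity) fun i => by
    have hfloor := Int.abs_sub_lt_one_of_floor_eq_floor (congrFun h i)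
    have hyi : y i - y' i = ((y i - a i) * n / L - (y' i - a i) * n / L) * (L / n) := by
      field_simp
      ring
    rw [PiLp.sub_apply, hyi, abs_mul, abs_of_pos (by positivity : 0 < L / n)]
    exact mul_le_of_le_one_left (by positivity) hfloor.le

theorem hasSeparableApprox_logKernel_square2_grid (hL : 0 < L) (hn : 0 < n)
    (hfar : ∀ x ∈ X, ∀ y ∈ square2 a L, 2 * (√2 * (L / n)) ≤ ‖x - y‖) (m : ℕ) :
    HasSeparableApprox logKernel X (square2 a L) ((n + 1) ^ 2 * (2 * m + 1)) ((1 / 2) ^ m) := by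
  have hcard : (Fintype.piFinset fun _ : Fin 2 => Finset.Icc 0 (n : ℤ)).card = (n + 1) ^ 2 := by
    simp
  rw [← hcard]
  refine .of_cover _ (gridCell a L n) (fun y hy => gridCell_mem hL hy) fun i => ?_
  obtain ⟨c, hc⟩ : ∃ c, ∀ x ∈ X, ∀ y ∈ {y ∈ square2 a L | gridCell a L n y = i},
      2 * ‖y - c‖ ≤ ‖x - c‖ := by
    rcases Set.eq_empty_or_nonempty {y ∈ square2 a L | gridCell a L n y = i} with
      hempty | ⟨c, hcY, hci⟩
    · exact ⟨a, by simp [hempty]⟩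
    · refine ⟨c, fun x hx y ⟨_, hyi⟩ => ?_⟩
      calc 2 * ‖y - c‖ ≤ 2 * (√2 * (L / n)) := by
            gcongr
            exact norm_sub_le_of_gridCell_eq hL hn (hyi.trans hci.symm)
        _ ≤ ‖x - c‖ := hfar x hx c hcY
  exact hasSeparableApprox_logKernel_of_two_mul_norm_le
    Complex.orthonormalBasisOneI.repr.symm c hc m

theorem hasSeparableApprox_logKernel_square2 {ηt : ℝ} {r : ℕ} (hL : 0 < L) (hηt : 0 < ηt)
    (hn : 2 / ηt ≤ n) (hdist : ∀ x ∈ X, ∀ y ∈ square2 a L, ηt * (√2 * L) ≤ ‖x - y‖)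
    (hr : 1 ≤ r) :
    HasSeparableApprox logKernel X (square2 a L) r
      ((1 + 1 / ηt) * (1 / 2) ^ (r / (3 * (n + 1) ^ 2))) := by
  set m := r / (3 * (n + 1) ^ 2)
  rcases Nat.eq_zero_or_pos m with hm | hm
  · refine (hasSeparableApprox_logKernel_rankOne (mem_square2_self hL.le) (by positivity) hdist
      fun y hy => norm_sub_le_of_mem_square2 hy).mono hr ?_
    rw [hm, pow_zero, mul_one, mul_comm ηt, ← div_div, div_self (by positivity)]
    linarith
  have hn0 : (0 : ℝ) < n := (div_pos two_pos hηt).trans_le hn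
  have hfar (x) (hx : x ∈ X) (y) (hy : y ∈ square2 a L) : 2 * (√2 * (L / n)) ≤ ‖x - y‖ := by
    calc 2 * (√2 * (L / n)) = √2 * L * (2 / n) := by ring
      _ ≤ √2 * L * ηt := by
          gcongr
          rw [div_le_iff₀ hn0, mul_comm]
          rwa [div_le_iff₀ hηt] at hn
      _ = ηt * (√2 * L) := by ring
      _ ≤ ‖x - y‖ := hdist x hx y hy
  refine (hasSeparableApprox_logKernel_square2_grid hL (Nat.cast_pos.mp hn0) hfar m).mono ?_ ?_
  · calc (n + 1) ^ 2 * (2 * m + 1) ≤ 3 * (n + 1) ^ 2 * m := by nlinarith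
      _ ≤ r := Nat.mul_div_le r _
  · exact le_mul_of_one_le_left (by positivity) (by linarith [one_div_pos.mpr hηt])

end Square

theorem exp_neg_mul_sq_le (β t : ℝ) {α : ℝ} (hα : 0 < α) :
    exp (-(α * t ^ 2)) ≤ exp (β ^ 2 / (4 * α)) * exp (-(β * t)) := by
  rw [← exp_add, exp_le_exp, div_add' _ _ _ (by positivity), le_div_iff₀ (by positivity)]
  nlinarith [sq_nonneg (2 * α * t - β)]

theorem half_pow_div_le (β : ℝ) (r : ℕ) {N : ℕ} (hN : 0 < N) :
    (1 / 2 : ℝ) ^ (r / N) ≤ 2 * exp (β ^ 2 * N / (4 * log 2)) * exp (-(β * √r)) := by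
  have hlog2 : 0 < log 2 := log_pos one_lt_two
  have hN' : (0 : ℝ) < N := Nat.cast_pos.mpr hN
  have hm : (r : ℝ) / N - 1 ≤ (r / N : ℕ) := by
    rw [← Nat.floor_div_eq_div (K := ℝ)]
    exact (Nat.sub_one_lt_floor _).le
  calc (1 / 2 : ℝ) ^ (r / N) = exp (-((r / N : ℕ) * log 2)) := by
        rw [exp_neg, exp_nat_mul, exp_log two_pos, one_div, inv_pow]
    _ ≤ exp (-((r / N - 1) * log 2)) := by gcongr
    _ = exp (log 2) * exp (-(log 2 / N * √r ^ 2)) := by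
        rw [sq_sqrt (Nat.cast_nonneg r), ← exp_add]
        congr 1
        field_simp
        ring
    _ ≤ 2 * (exp (β ^ 2 / (4 * (log 2 / N))) * exp (-(β * √r))) := by
        rw [exp_log two_pos]
        gcongr
        exact exp_neg_mul_sq_le β _ (by positivity)
    _ = _ := by
        rw [mul_assoc]
        congr 3
        field_simp

/-- Degenerate (separable) approximation of the kernel `κ(x,y) = -(1/(2π)) log ‖x-y‖` of the
single layer operator in `ℝ²`, with exponential accuracy in `r^(1/2)`. The constant `C`
depends only on `η'`; the statement applies to every `η̃ > 0` with `η' ∈ (0, 2η̃)`. -/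
theorem degenerate_kernel_approximation_2d
    (η' : ℝ) (hη'0 : 0 < η') :
    ∃ C : ℝ, 0 < C ∧
      ∀ (ηt : ℝ), 0 < ηt → η' < 2 * ηt →
      ∀ (L : ℝ), 0 < L →
      ∀ (a : EuclideanSpace ℝ (Fin 2)) (DX : Set (EuclideanSpace ℝ (Fin 2))),
        (∀ x ∈ DX, ∀ y ∈ square2 a L, ηt * (Real.sqrt 2 * L) ≤ dist x y) →
        ∀ r : ℕ, 1 ≤ r →
          ∃ g₁ g₂ : Fin r → EuclideanSpace ℝ (Fin 2) → ℝ,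
            ∀ x ∈ DX, ∀ y ∈ square2 a L,
              |(-(1 / (2 * Real.pi))) * Real.log ‖x - y‖ - ∑ i : Fin r, g₁ i x * g₂ i y| ≤
                C * (1 + 1 / ηt) * (1 + η') ^ (-((r : ℝ) ^ ((1 : ℝ) / 2))) := by
  set n := ⌈4 / η'⌉₊
  set C := 2 * exp (log (1 + η') ^ 2 * ((3 * (n + 1) ^ 2 : ℕ) : ℝ) / (4 * log 2))
  refine ⟨C, by positivity, fun ηt hηt hη' L hL a DX hdist r hr => ?_⟩
  have hn : 2 / ηt ≤ n := calc
    2 / ηt ≤ 4 / η' := by rw [div_le_div_iff₀ hηt hη'0]; linarith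
    _ ≤ n := Nat.le_ceil _
  have hdist' : ∀ x ∈ DX, ∀ y ∈ square2 a L, ηt * (√2 * L) ≤ ‖x - y‖ :=
    fun x hx y hy => (hdist x hx y hy).trans_eq (dist_eq_norm x y)
  refine (hasSeparableApprox_logKernel_square2 hL hηt hn hdist' hr).mono le_rfl ?_
  calc (1 + 1 / ηt) * (1 / 2) ^ (r / (3 * (n + 1) ^ 2))
      ≤ (1 + 1 / ηt) * (C * exp (-(log (1 + η') * √r))) := by
        gcongr
        exact half_pow_div_le _ r (N := 3 * (n + 1) ^ 2) (by positivity)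
    _ = C * (1 + 1 / ηt) * (1 + η') ^ (-((r : ℝ) ^ ((1 : ℝ) / 2))) := by
        rw [← sqrt_eq_rpow, rpow_def_of_pos (by linarith), mul_neg]
        ring
end

section
/- (Hierarchical relation of Schur complements.) Let ρ, τ₁, τ₂ be finite index types and let A be a real symmetric positive definite matrix indexed by ρ ⊕ τ₁ ⊕ τ₂, with blocks A_{ab} for a, b ∈ {ρ, τ₁, τ₂}. Then the principal blocks A_{ρρ} and the block over ρ ⊕ τ₁ are invertible; defining the Schur complements with respect to ρ by S(τ_i, τ_j) := A_{τ_i τ_j} − A_{τ_i ρ}·A_{ρρ}^{−1}·A_{ρ τ_j} for i, j ∈ {1,2}, and the Schur complement with respect to ρ ⊕ τ₁ by S'(τ₂, τ₂) := A_{τ₂τ₂} − A_{τ₂, ρ⊕τ₁}·(A_{ρ⊕τ₁, ρ⊕τ₁})^{−1}·A_{ρ⊕τ₁, τ₂}, the matrix S(τ₁, τ₁) is invertible and the Schur complement of A over τ₁ ⊕ τ₂ with respect to ρ satisfies the block identity S(τ, τ) = [[S(τ₁,τ₁), S(τ₁,τ₂)], [S(τ₂,τ₁), S'(τ₂,τ₂)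 + S(τ₂,τ₁)·S(τ₁,τ₁)^{−1}·S(τ₁,τ₂)]], where S(τ,τ) denotes the matrix over τ₁ ⊕ τ₂ given by [[A_{τ₁τ₁},A_{τ₁τ₂}],[A_{τ₂τ₁},A_{τ₂τ₂}]] − [A_{τ₁ρ};A_{τ₂ρ}]·A_{ρρ}^{−1}·[A_{ρτ₁}, A_{ρτ₂}]. In particular, S'(τ₂, τ₂) = S(τ₂, τ₂) − S(τ₂, τ₁)·S(τ₁, τ₁)^{−1}·S(τ₁, τ₂). -/
/-! Principal submatrices of a positive definite matrix are positive definite, hence invertible;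
since `A_{ρρ}` is invertible, the block over `ρ ⊕ τ₁` is invertible exactly when its Schur
complement `S(τ₁, τ₁)` is. The identity for `S'(τ₂, τ₂)` is the Crabtree–Haynsworth quotient
formula: writing the inverse of the `ρ ⊕ τ₁` block through the block-inverse formula around
`A_{ρρ}` and expanding shows that eliminating `ρ ⊕ τ₁` at once is the same as eliminating `ρ` and
then `τ₁`. The block form of `S(τ, τ)` holds entrywise. -/

open Matrix

variable {ρ τ₁ τ₂ : Type*}

/-- The Schur complement, with respect to the `ρ`-block, of the submatrix of `A` with
rows indexed (via `f`) by `a` and columns indexed (via `g`) by `b`: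
`S(a,b) = A_{ab} - A_{aρ} A_{ρρ}⁻¹ A_{ρb}`. -/
noncomputable def schurBlock {a b : Type*} [Fintype ρ] [DecidableEq ρ]
    (A : Matrix (ρ ⊕ τ₁ ⊕ τ₂) (ρ ⊕ τ₁ ⊕ τ₂) ℝ)
    (f : a → ρ ⊕ τ₁ ⊕ τ₂) (g : b → ρ ⊕ τ₁ ⊕ τ₂) : Matrix a b ℝ :=
  A.submatrix f g -
    A.submatrix f Sum.inl * (A.submatrix Sum.inl Sum.inl)⁻¹ * A.submatrix Sum.inl g

namespace Matrix

variable {ι κ l m n o α : Type*}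

theorem submatrix_sumElim_sumElim (A : Matrix ι κ α) (f₁ : l → ι) (f₂ : m → ι)
    (g₁ : n → κ) (g₂ : o → κ) :
    A.submatrix (Sum.elim f₁ f₂) (Sum.elim g₁ g₂) =
      fromBlocks (A.submatrix f₁ g₁) (A.submatrix f₁ g₂) (A.submatrix f₂ g₁)
        (A.submatrix f₂ g₂) := by
  ext (i | i) (j | j) <;> rfl

theorem submatrix_sumElim_left (A : Matrix ι κ α) (f₁ : l → ι) (f₂ : m → ι) (g : n → κ) :
    A.submatrix (Sum.elim f₁ f₂) g = fromRows (A.submatrix f₁ g) (A.submatrix f₂ g) := by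
  ext (i | i) j <;> rfl

theorem submatrix_sumElim_right (A : Matrix ι κ α) (f : l → ι) (g₁ : n → κ) (g₂ : o → κ) :
    A.submatrix f (Sum.elim g₁ g₂) = fromCols (A.submatrix f g₁) (A.submatrix f g₂) := by
  ext i (j | j) <;> rfl

theorem schur_complement_quotient [CommRing α] [Fintype m] [Fintype n] [DecidableEq m]
    [DecidableEq n]
    (P : Matrix m m α) (B₁ : Matrix m n α) (B₂ : Matrix m o α)
    (C₁ : Matrix n m α) (C₂ : Matrix o m α) (D₁₁ : Matrix n n α) (D₁₂ : Matrix n o α)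
    (D₂₁ : Matrix o n α) (D₂₂ : Matrix o o α)
    (hP : IsUnit P) (hS : IsUnit (D₁₁ - C₁ * P⁻¹ * B₁)) :
    D₂₂ - fromCols C₂ D₂₁ * (fromBlocks P B₁ C₁ D₁₁)⁻¹ * fromRows B₂ D₁₂ =
      (D₂₂ - C₂ * P⁻¹ * B₂) -
        (D₂₁ - C₂ * P⁻¹ * B₁) * (D₁₁ - C₁ * P⁻¹ * B₁)⁻¹ * (D₁₂ - C₁ * P⁻¹ * B₂) := by
  let := hP.invertible
  let : Invertible (D₁₁ - C₁ * ⅟P * B₁) := by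
    rw [invOf_eq_nonsing_inv]; exact hS.invertible
  let := fromBlocks₁₁Invertible P B₁ C₁ D₁₁
  rw [← invOf_eq_nonsing_inv (fromBlocks P B₁ C₁ D₁₁), invOf_fromBlocks₁₁_eq,
    fromCols_mul_fromBlocks, fromCols_mul_fromRows]
  simp only [invOf_eq_nonsing_inv, Matrix.mul_add, Matrix.add_mul, Matrix.mul_sub,
    Matrix.sub_mul, Matrix.mul_neg, Matrix.neg_mul, Matrix.mul_assoc]
  abel

end Matrix

theorem schurBlock_sumElim_sumElim {l m n o : Type*} [Fintype ρ] [DecidableEq ρ]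
    (A : Matrix (ρ ⊕ τ₁ ⊕ τ₂) (ρ ⊕ τ₁ ⊕ τ₂) ℝ) (f₁ : l → ρ ⊕ τ₁ ⊕ τ₂) (f₂ : m → ρ ⊕ τ₁ ⊕ τ₂)
    (g₁ : n → ρ ⊕ τ₁ ⊕ τ₂) (g₂ : o → ρ ⊕ τ₁ ⊕ τ₂) :
    schurBlock A (Sum.elim f₁ f₂) (Sum.elim g₁ g₂) =
      fromBlocks (schurBlock A f₁ g₁) (schurBlock A f₁ g₂) (schurBlock A f₂ g₁)
        (schurBlock A f₂ g₂) := by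
  ext (i | i) (j | j) <;> rfl

theorem schur_hierarchical_relation_general
    [Fintype ρ] [Fintype τ₁] [Fintype τ₂] [DecidableEq ρ] [DecidableEq τ₁]
    (A : Matrix (ρ ⊕ τ₁ ⊕ τ₂) (ρ ⊕ τ₁ ⊕ τ₂) ℝ) (hA : A.PosDef) :
    IsUnit (A.submatrix (Sum.inl : ρ → ρ ⊕ τ₁ ⊕ τ₂) Sum.inl) ∧
    IsUnit (A.submatrix
      (Sum.elim Sum.inl (fun i => Sum.inr (Sum.inl i)) : ρ ⊕ τ₁ → ρ ⊕ τ₁ ⊕ τ₂)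
      (Sum.elim Sum.inl (fun i => Sum.inr (Sum.inl i)))) ∧
    IsUnit (schurBlock A (fun i : τ₁ => Sum.inr (Sum.inl i)) (fun i : τ₁ => Sum.inr (Sum.inl i))) ∧
    schurBlock A (Sum.inr : τ₁ ⊕ τ₂ → ρ ⊕ τ₁ ⊕ τ₂) Sum.inr =
      Matrix.fromBlocks
        (schurBlock A (fun i : τ₁ => Sum.inr (Sum.inl i)) (fun i : τ₁ => Sum.inr (Sum.inl i)))
        (schurBlock A (fun i : τ₁ => Sum.inr (Sum.inl i)) (fun i : τ₂ => Sum.inr (Sum.inr i)))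
        (schurBlock A (fun i : τ₂ => Sum.inr (Sum.inr i)) (fun i : τ₁ => Sum.inr (Sum.inl i)))
        ((A.submatrix (fun i : τ₂ => Sum.inr (Sum.inr i)) (fun i : τ₂ => Sum.inr (Sum.inr i)) -
            A.submatrix (fun i : τ₂ => Sum.inr (Sum.inr i))
                (Sum.elim Sum.inl (fun i => Sum.inr (Sum.inl i))) *
              (A.submatrix (Sum.elim Sum.inl (fun i => Sum.inr (Sum.inl i)) : ρ ⊕ τ₁ → ρ ⊕ τ₁ ⊕ τ₂)
                  (Sum.elim Sum.inl (fun i => Sum.inr (Sum.inl i))))⁻¹ *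
              A.submatrix (Sum.elim Sum.inl (fun i => Sum.inr (Sum.inl i)))
                (fun i : τ₂ => Sum.inr (Sum.inr i))) +
          schurBlock A (fun i : τ₂ => Sum.inr (Sum.inr i)) (fun i : τ₁ => Sum.inr (Sum.inl i)) *
            (schurBlock A (fun i : τ₁ => Sum.inr (Sum.inl i)) (fun i : τ₁ => Sum.inr (Sum.inl i)))⁻¹ *
            schurBlock A (fun i : τ₁ => Sum.inr (Sum.inl i)) (fun i : τ₂ => Sum.inr (Sum.inr i))) ∧
    (A.submatrix (fun i : τ₂ => Sum.inr (Sum.inr i)) (fun i : τ₂ => Sum.inr (Sum.inr i)) -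
        A.submatrix (fun i : τ₂ => Sum.inr (Sum.inr i))
            (Sum.elim Sum.inl (fun i => Sum.inr (Sum.inl i))) *
          (A.submatrix (Sum.elim Sum.inl (fun i => Sum.inr (Sum.inl i)) : ρ ⊕ τ₁ → ρ ⊕ τ₁ ⊕ τ₂)
              (Sum.elim Sum.inl (fun i => Sum.inr (Sum.inl i))))⁻¹ *
          A.submatrix (Sum.elim Sum.inl (fun i => Sum.inr (Sum.inl i)))
            (fun i : τ₂ => Sum.inr (Sum.inr i))) =
      schurBlock A (fun i : τ₂ => Sum.inr (Sum.inr i)) (fun i : τ₂ => Sum.inr (Sum.inr i)) -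
        schurBlock A (fun i : τ₂ => Sum.inr (Sum.inr i)) (fun i : τ₁ => Sum.inr (Sum.inl i)) *
          (schurBlock A (fun i : τ₁ => Sum.inr (Sum.inl i)) (fun i : τ₁ => Sum.inr (Sum.inl i)))⁻¹ *
          schurBlock A (fun i : τ₁ => Sum.inr (Sum.inl i)) (fun i : τ₂ => Sum.inr (Sum.inr i)) := by
  set r₁ : τ₁ → ρ ⊕ τ₁ ⊕ τ₂ := fun i => Sum.inr (Sum.inl i)
  set r₂ : τ₂ → ρ ⊕ τ₁ ⊕ τ₂ := fun i => Sum.inr (Sum.inr i)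
  set f : ρ ⊕ τ₁ → ρ ⊕ τ₁ ⊕ τ₂ := Sum.elim Sum.inl r₁
  have hPu : IsUnit (A.submatrix Sum.inl Sum.inl : Matrix ρ ρ ℝ) :=
    (hA.submatrix Sum.inl_injective).isUnit
  have hf : Function.Injective f :=
    Sum.inl_injective.sumElim (Sum.inr_injective.comp Sum.inl_injective) fun _ _ => Sum.inl_ne_inr
  have hMu : IsUnit (A.submatrix f f) := (hA.submatrix hf).isUnit
  have hS₁₁ : IsUnit (schurBlock A r₁ r₁) := by
    let := hPu.invertible
    rwa [submatrix_sumElim_sumElim, isUnit_fromBlocks_iff_of_invertible₁₁,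
      invOf_eq_nonsing_inv] at hMu
  have hquot : A.submatrix r₂ r₂ - A.submatrix r₂ f * (A.submatrix f f)⁻¹ * A.submatrix f r₂ =
      schurBlock A r₂ r₂ - schurBlock A r₂ r₁ * (schurBlock A r₁ r₁)⁻¹ * schurBlock A r₁ r₂ := by
    rw [submatrix_sumElim_sumElim A Sum.inl r₁ Sum.inl r₁, submatrix_sumElim_right,
      submatrix_sumElim_left]
    exact schur_complement_quotient _ _ _ _ _ _ _ _ _ hPu hS₁₁
  have hblocks : schurBlock A (Sum.inr : τ₁ ⊕ τ₂ → ρ ⊕ τ₁ ⊕ τ₂) Sum.inr =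
      fromBlocks (schurBlock A r₁ r₁) (schurBlock A r₁ r₂) (schurBlock A r₂ r₁)
        (schurBlock A r₂ r₂) := by
    rw [← Sum.elim_comp_inl_inr (Sum.inr : τ₁ ⊕ τ₂ → ρ ⊕ τ₁ ⊕ τ₂)]
    exact schurBlock_sumElim_sumElim A r₁ r₂ r₁ r₂
  exact ⟨hPu, hMu, hS₁₁, by rw [hblocks, hquot, sub_add_cancel], hquot⟩

/-- Hierarchical relation of Schur complements for a symmetric positive definite matrix
indexed by `ρ ⊕ τ₁ ⊕ τ₂`. -/
theorem schur_hierarchical_relation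
    [Fintype ρ] [Fintype τ₁] [Fintype τ₂] [DecidableEq ρ] [DecidableEq τ₁] [DecidableEq τ₂]
    (A : Matrix (ρ ⊕ τ₁ ⊕ τ₂) (ρ ⊕ τ₁ ⊕ τ₂) ℝ) (hA : A.PosDef) :
    IsUnit (A.submatrix (Sum.inl : ρ → ρ ⊕ τ₁ ⊕ τ₂) Sum.inl) ∧
    IsUnit (A.submatrix
      (Sum.elim Sum.inl (fun i => Sum.inr (Sum.inl i)) : ρ ⊕ τ₁ → ρ ⊕ τ₁ ⊕ τ₂)
      (Sum.elim Sum.inl (fun i => Sum.inr (Sum.inl i)))) ∧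
    IsUnit (schurBlock A (fun i : τ₁ => Sum.inr (Sum.inl i)) (fun i : τ₁ => Sum.inr (Sum.inl i))) ∧
    schurBlock A (Sum.inr : τ₁ ⊕ τ₂ → ρ ⊕ τ₁ ⊕ τ₂) Sum.inr =
      Matrix.fromBlocks
        (schurBlock A (fun i : τ₁ => Sum.inr (Sum.inl i)) (fun i : τ₁ => Sum.inr (Sum.inl i)))
        (schurBlock A (fun i : τ₁ => Sum.inr (Sum.inl i)) (fun i : τ₂ => Sum.inr (Sum.inr i)))
        (schurBlock A (fun i : τ₂ => Sum.inr (Sum.inr i)) (fun i : τ₁ => Sum.inr (Sum.inl i)))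
        ((A.submatrix (fun i : τ₂ => Sum.inr (Sum.inr i)) (fun i : τ₂ => Sum.inr (Sum.inr i)) -
            A.submatrix (fun i : τ₂ => Sum.inr (Sum.inr i))
                (Sum.elim Sum.inl (fun i => Sum.inr (Sum.inl i))) *
              (A.submatrix (Sum.elim Sum.inl (fun i => Sum.inr (Sum.inl i)) : ρ ⊕ τ₁ → ρ ⊕ τ₁ ⊕ τ₂)
                  (Sum.elim Sum.inl (fun i => Sum.inr (Sum.inl i))))⁻¹ *
              A.submatrix (Sum.elim Sum.inl (fun i => Sum.inr (Sum.inl i)))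
                (fun i : τ₂ => Sum.inr (Sum.inr i))) +
          schurBlock A (fun i : τ₂ => Sum.inr (Sum.inr i)) (fun i : τ₁ => Sum.inr (Sum.inl i)) *
            (schurBlock A (fun i : τ₁ => Sum.inr (Sum.inl i)) (fun i : τ₁ => Sum.inr (Sum.inl i)))⁻¹ *
            schurBlock A (fun i : τ₁ => Sum.inr (Sum.inl i)) (fun i : τ₂ => Sum.inr (Sum.inr i))) ∧
    (A.submatrix (fun i : τ₂ => Sum.inr (Sum.inr i)) (fun i : τ₂ => Sum.inr (Sum.inr i)) -
        A.submatrix (fun i : τ₂ => Sum.inr (Sum.inr i))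
            (Sum.elim Sum.inl (fun i => Sum.inr (Sum.inl i))) *
          (A.submatrix (Sum.elim Sum.inl (fun i => Sum.inr (Sum.inl i)) : ρ ⊕ τ₁ → ρ ⊕ τ₁ ⊕ τ₂)
              (Sum.elim Sum.inl (fun i => Sum.inr (Sum.inl i))))⁻¹ *
          A.submatrix (Sum.elim Sum.inl (fun i => Sum.inr (Sum.inl i)))
            (fun i : τ₂ => Sum.inr (Sum.inr i))) =
      schurBlock A (fun i : τ₂ => Sum.inr (Sum.inr i)) (fun i : τ₂ => Sum.inr (Sum.inr i)) -
        schurBlock A (fun i : τ₂ => Sum.inr (Sum.inr i)) (fun i : τ₁ => Sum.inr (Sum.inl i)) *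
          (schurBlock A (fun i : τ₁ => Sum.inr (Sum.inl i)) (fun i : τ₁ => Sum.inr (Sum.inl i)))⁻¹ *
          schurBlock A (fun i : τ₁ => Sum.inr (Sum.inl i)) (fun i : τ₂ => Sum.inr (Sum.inr i)) :=
  schur_hierarchical_relation_general A hA
end

section
/- (Stabilized versus unstabilized Schur complements differ by rank 2.) Let I be a finite index set, W a real I × I matrix, B : I → ℝ a vector, and α ∈ ℝ; set W^st := W + α·B·Bᵀ (the matrix with entries W_{ij} + α·B_i·B_j). Let ρ, τ, σ be subsets of I and assume that both W|_{ρ×ρ} and W^st|_{ρ×ρ} are invertible. Then the matrix D := W^st|_{τ×ρ}·(W^st|_{ρ×ρ})^{−1}·W^st|_{ρ×σ} − W|_{τ×ρ}·(W|_{ρ×ρ})^{−1}·W^st|_{ρ×σ} has rank at most 2. Equivalently, the Schur complement S(τ,σ) := W^st|_{τ×σ} − W^st|_{τ×ρ}·(W^st|_{ρ×ρ})^{−1}·W^st|_{ρ×σ} differs from W^st|_{τ×σ} − W|_{τ×ρ}·(W|_{ρ×ρ})^{−1}·W^st|_{ρ×σ} by a matrix of rank at most 2. -/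
/-!
Write `P = W|ρ×ρ`, `Q = W^st|ρ×ρ`, `A = W|τ×ρ`, `A' = W^st|τ×ρ`. Both `Q - P` and `A' - A` are
rank-one matrices `(α B) Bᵀ` with the same row vector `B|ρ`, so `A' - A P⁻¹ Q` is rank one, and
so is `A' Q⁻¹ - A P⁻¹ = (A' - A P⁻¹ Q) Q⁻¹`. Thus `D` even has rank at most 1.
-/

open Matrix

theorem Matrix.mul_inv_sub_mul_inv_eq_vecMulVec {m n R : Type*} [Fintype n] [DecidableEq n]
    [CommRing R] {A A' : Matrix m n R} {P Q : Matrix n n R} {x y : n → R} {z : m → R}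
    (hP : IsUnit P) (hQ : IsUnit Q) (hQP : Q = P + vecMulVec x y) (hA : A' = A + vecMulVec z y) :
    A' * Q⁻¹ - A * P⁻¹ = vecMulVec (z - (A * P⁻¹) *ᵥ x) (y ᵥ* Q⁻¹) := by
  rw [isUnit_iff_isUnit_det] at hP hQ
  calc A' * Q⁻¹ - A * P⁻¹ = (A' - A * P⁻¹ * Q) * Q⁻¹ := by
        rw [Matrix.sub_mul, mul_nonsing_inv_cancel_right _ _ hQ]
    _ = vecMulVec (z - (A * P⁻¹) *ᵥ x) y * Q⁻¹ := by
        rw [hQP, hA, Matrix.mul_add, nonsing_inv_mul_cancel_right _ _ hP, mul_vecMulVec,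
          sub_vecMulVec, add_sub_add_left_eq_sub]
    _ = vecMulVec (z - (A * P⁻¹) *ᵥ x) (y ᵥ* Q⁻¹) := vecMulVec_mul _ _ _

/-- Stabilized versus unstabilized Schur complements differ by a matrix of rank at most 2. -/
theorem stabilized_schur_rank_two {I : Type*} [Fintype I] [DecidableEq I]
    (W : Matrix I I ℝ) (B : I → ℝ) (α : ℝ) (ρ τ σ : Finset I)
    (hW : IsUnit (W.submatrix (fun i : ↥ρ => (i : I)) (fun i : ↥ρ => (i : I))))
    (hWst : IsUnit ((W + α • Matrix.vecMulVec B B).submatrix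
      (fun i : ↥ρ => (i : I)) (fun i : ↥ρ => (i : I)))) :
    Matrix.rank
      ((W + α • Matrix.vecMulVec B B).submatrix (fun i : ↥τ => (i : I)) (fun i : ↥ρ => (i : I)) *
          ((W + α • Matrix.vecMulVec B B).submatrix
              (fun i : ↥ρ => (i : I)) (fun i : ↥ρ => (i : I)))⁻¹ *
          (W + α • Matrix.vecMulVec B B).submatrix
            (fun i : ↥ρ => (i : I)) (fun i : ↥σ => (i : I)) -
        W.submatrix (fun i : ↥τ => (i : I)) (fun i : ↥ρ => (i : I)) *
          (W.submatrix (fun i : ↥ρ => (i : I)) (fun i : ↥ρ => (i : I)))⁻¹ *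
          (W + α • Matrix.vecMulVec B B).submatrix
            (fun i : ↥ρ => (i : I)) (fun i : ↥σ => (i : I))) ≤ 2 := by
  have hUpdate : ∀ (s : Finset I), (W + α • vecMulVec B B).submatrix (fun i : ↥s => (i : I))
      (fun i : ↥ρ => (i : I)) = W.submatrix (fun i : ↥s => (i : I)) (fun i : ↥ρ => (i : I)) +
        vecMulVec (fun i : ↥s => α * B i) (fun i : ↥ρ => B i) := fun s => by
    ext i j
    simp [vecMulVec_apply, mul_assoc]
  rw [← Matrix.sub_mul, mul_inv_sub_mul_inv_eq_vecMulVec hW hWst (hUpdate ρ) (hUpdate τ),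
    vecMulVec_mul]
  exact (rank_vecMulVec_le _ _).trans one_le_two
end

section
/- (Inverse of the stabilized matrix from the saddle-point inverse.) Let N be a finite index set, W a real N × N matrix, B a real N × 1 matrix (column vector), and α ∈ ℝ. Suppose the saddle-point matrix 𝒲 := [[W, B],[Bᵀ, 0]] (a square matrix of size |N|+1) is invertible, and write its inverse in blocks as 𝒲^{−1} = [[G, P],[Q, z]] with G of size N × N, P of size N × 1, Q of size 1 × N, and z of size 1 × 1. If the stabilized matrix W^st := W + α·B·Bᵀ is invertible, then (W^st)^{−1} = G + (W^st)^{−1}·B·Q. -/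
/-!
Write `𝒲⁻¹ = [[G, P], [Q, z]]`. The first block column of `𝒲 𝒲⁻¹ = 1` gives
`W G + B Q = 1` and `Bᵀ G = 0`. Since the stabilization `α B Bᵀ` has `Bᵀ` as its right factor,
it annihilates `G`, so `W^st (G + (W^st)⁻¹ B Q) = W G + B Q = 1`.
-/

open Matrix

namespace Matrix

variable {m n R : Type*} [Fintype m] [Fintype n] [DecidableEq m] [CommRing R]

theorem fromBlocks_mul_inv_toBlocks_col₁ [DecidableEq n] {A : Matrix m m R} {B : Matrix m n R}
    {C : Matrix n m R} {D : Matrix n n R} (h : IsUnit (fromBlocks A B C D)) :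
    A * (fromBlocks A B C D)⁻¹.toBlocks₁₁ + B * (fromBlocks A B C D)⁻¹.toBlocks₂₁ = 1 ∧
      C * (fromBlocks A B C D)⁻¹.toBlocks₁₁ + D * (fromBlocks A B C D)⁻¹.toBlocks₂₁ = 0 := by
  have hmul := mul_nonsing_inv _ ((isUnit_iff_isUnit_det _).mp h)
  rw [← fromBlocks_toBlocks (fromBlocks A B C D)⁻¹, fromBlocks_multiply, ← fromBlocks_one]
    at hmul
  exact ⟨congrArg toBlocks₁₁ hmul, congrArg toBlocks₂₁ hmul⟩

theorem inv_add_mul_eq_of_mul_add_mul_eq_one {W G : Matrix m m R} {B : Matrix m n R}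
    {K Q : Matrix n m R} (hA : IsUnit (W + B * K)) (hWG : W * G + B * Q = 1) (hKG : K * G = 0) :
    (W + B * K)⁻¹ = G + (W + B * K)⁻¹ * B * Q := by
  refine inv_eq_right_inv ?_
  calc (W + B * K) * (G + (W + B * K)⁻¹ * B * Q)
      = W * G + B * (K * G) + (W + B * K) * (W + B * K)⁻¹ * B * Q := by
        simp only [Matrix.mul_add, Matrix.add_mul, Matrix.mul_assoc]
    _ = 1 := by rw [mul_nonsing_inv _ ((isUnit_iff_isUnit_det _).mp hA), hKG]; simpa using hWG

end Matrix

/-- Inverse of the stabilized matrix from the saddle-point inverse: if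
`𝒲 = [[W, B],[Bᵀ, 0]]` is invertible with inverse `[[G, P],[Q, z]]` and the stabilized
matrix `W^st = W + α B Bᵀ` is invertible, then `(W^st)⁻¹ = G + (W^st)⁻¹ B Q`. -/
theorem stabilized_inverse_from_saddle_point {N : Type*} [Fintype N] [DecidableEq N]
    (W : Matrix N N ℝ) (B : Matrix N Unit ℝ) (α : ℝ)
    (h𝒲 : IsUnit (Matrix.fromBlocks W B Bᵀ (0 : Matrix Unit Unit ℝ)))
    (hWst : IsUnit (W + α • (B * Bᵀ))) :
    (W + α • (B * Bᵀ))⁻¹ =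
      (Matrix.fromBlocks W B Bᵀ (0 : Matrix Unit Unit ℝ))⁻¹.toBlocks₁₁ +
        (W + α • (B * Bᵀ))⁻¹ * B *
          (Matrix.fromBlocks W B Bᵀ (0 : Matrix Unit Unit ℝ))⁻¹.toBlocks₂₁ := by
  obtain ⟨hWG, hBG⟩ := fromBlocks_mul_inv_toBlocks_col₁ h𝒲
  rw [Matrix.zero_mul, add_zero] at hBG
  have hstab : α • (B * Bᵀ) = B * (α • Bᵀ) := (Matrix.mul_smul B α Bᵀ).symm
  rw [hstab] at hWst ⊢
  exact inv_add_mul_eq_of_mul_add_mul_eq_one hWst hWG (by rw [Matrix.smul_mul, hBG, smul_zero])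
end

section
/- (Single-level blockwise spectral norm bound.) Let I be a finite index set, M a real I × I matrix, C ∈ ℕ, and let P be a finite collection of pairs (τ, σ) of subsets of I such that: (i) the rectangles τ × σ for (τ, σ) ∈ P are pairwise disjoint; (ii) whenever M_{ij} ≠ 0 there is (τ, σ) ∈ P with i ∈ τ and j ∈ σ; (iii) for every index i ∈ I, the number of pairs (τ, σ) ∈ P with i ∈ τ is at most C, and the number of pairs (τ, σ) ∈ P with i ∈ σ is at most C. Then ‖M‖₂ ≤ C · max_{(τ,σ) ∈ P} ‖M|_{τ×σ}‖₂. -/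
open Matrix

/-- The spectral norm of a real matrix: the operator norm of the induced linear map
between Euclidean spaces. -/
noncomputable def matrixSpectralNorm {m n : Type*} [Fintype m] [Fintype n] [DecidableEq n]
    (M : Matrix m n ℝ) : ℝ :=
  ‖LinearMap.toContinuousLinearMap (Matrix.toEuclideanLin M)‖

/-!
Write `⟪y, M x⟫ = ∑_{(τ,σ) ∈ P} ⟪y|τ, M|_{τ×σ} x|σ⟫`, which the covering and disjointness
hypotheses allow. Each term is at most `B ‖y|τ‖ ‖x|σ‖` with `B` the largest block norm, and by
Cauchy–Schwarz over the blocks `∑ ‖y|τ‖ ‖x|σ‖ ≤ (∑ ‖y|τ‖²)^{1/2} (∑ ‖x|σ‖²)^{1/2}`. Since every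
index lies in at most `C` row blocks and at most `C` column blocks, these two sums are bounded
by `C ‖y‖²` and `C ‖x‖²`.
-/

open Finset

lemma Finset.sum_eq_sum_sum_of_pairwiseDisjoint {α ι M : Type*} [Fintype α] [DecidableEq α]
    [AddCommMonoid M] (P : Finset ι) (S : ι → Finset α)
    (hdisj : (P : Set ι).PairwiseDisjoint S) (g : α → M) (hg : ∀ a, g a ≠ 0 → ∃ p ∈ P, a ∈ S p) :
    ∑ a, g a = ∑ p ∈ P, ∑ a ∈ S p, g a := by
  rw [← sum_biUnion hdisj]
  refine (sum_subset (subset_univ _) fun a _ ha => ?_).symm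
  by_contra h
  obtain ⟨p, hp, hap⟩ := hg a h
  exact ha (mem_biUnion.2 ⟨p, hp, hap⟩)

lemma inner_toEuclideanLin_eq_sum {m n : Type*} [Fintype m] [Fintype n] [DecidableEq n]
    (N : Matrix m n ℝ) (y : EuclideanSpace ℝ m) (x : EuclideanSpace ℝ n) :
    inner ℝ y (toEuclideanLin N x) = ∑ i, ∑ j, y i * N i j * x j := by
  simp [EuclideanSpace.inner_eq_star_dotProduct, dotProduct, mulVec, mul_sum, mul_assoc, mul_comm,
    mul_left_comm]

lemma sum_mul_apply_mul_le_matrixSpectralNorm {m n : Type*} [Fintype m] [Fintype n]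
    [DecidableEq n] (N : Matrix m n ℝ) (y : EuclideanSpace ℝ m) (x : EuclideanSpace ℝ n) :
    ∑ i, ∑ j, y i * N i j * x j ≤ matrixSpectralNorm N * ‖y‖ * ‖x‖ := by
  rw [← inner_toEuclideanLin_eq_sum]
  calc inner ℝ y (toEuclideanLin N x) ≤ ‖y‖ * ‖toEuclideanLin N x‖ := real_inner_le_norm _ _
    _ ≤ ‖y‖ * (matrixSpectralNorm N * ‖x‖) := by
        gcongr; exact (LinearMap.toContinuousLinearMap (toEuclideanLin N)).le_opNorm x
    _ = _ := by ring

lemma matrixSpectralNorm_le_of_sum_mul_apply_mul_le {m n : Type*} [Fintype m] [Fintype n]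
    [DecidableEq n] (N : Matrix m n ℝ) {K : ℝ} (hK : 0 ≤ K)
    (h : ∀ (y : EuclideanSpace ℝ m) (x : EuclideanSpace ℝ n),
      ∑ i, ∑ j, y i * N i j * x j ≤ K * ‖y‖ * ‖x‖) :
    matrixSpectralNorm N ≤ K := by
  refine ContinuousLinearMap.opNorm_le_bound _ hK fun x => ?_
  set v : EuclideanSpace ℝ m := toEuclideanLin N x
  change ‖v‖ ≤ K * ‖x‖
  have hv : ‖v‖ * ‖v‖ ≤ K * ‖x‖ * ‖v‖ := by
    rw [← real_inner_self_eq_norm_mul_norm, inner_toEuclideanLin_eq_sum]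
    linarith [h v x]
  rcases (norm_nonneg v).eq_or_lt with h0 | h0
  · rw [← h0]; positivity
  · exact le_of_mul_le_mul_right hv h0

namespace EuclideanSpace

variable {I : Type*}

noncomputable def restrictFinset (s : Finset I) (x : EuclideanSpace ℝ I) : EuclideanSpace ℝ s :=
  WithLp.toLp 2 fun j => x j

lemma norm_restrictFinset_sq (s : Finset I) (x : EuclideanSpace ℝ I) :
    ‖restrictFinset s x‖ ^ 2 = ∑ j ∈ s, x j ^ 2 := by
  simp [EuclideanSpace.norm_sq_eq, restrictFinset, ← Finset.sum_coe_sort s]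

lemma sum_norm_restrictFinset_sq_le [Fintype I] [DecidableEq I] {ι : Type*} (P : Finset ι)
    (S : ι → Finset I) {C : ℕ} (hC : ∀ i, #{p ∈ P | i ∈ S p} ≤ C) (x : EuclideanSpace ℝ I) :
    ∑ p ∈ P, ‖restrictFinset (S p) x‖ ^ 2 ≤ C * ‖x‖ ^ 2 := by
  calc ∑ p ∈ P, ‖restrictFinset (S p) x‖ ^ 2
      = ∑ i, (#{p ∈ P | i ∈ S p} : ℝ) * x i ^ 2 := by
        simp only [norm_restrictFinset_sq]
        rw [sum_comm' (t' := univ) (s' := fun i => {p ∈ P | i ∈ S p}) (by simp [and_comm])]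
        simp
    _ ≤ ∑ i, (C : ℝ) * x i ^ 2 := by gcongr with i; exact_mod_cast hC i
    _ = C * ‖x‖ ^ 2 := by simp [EuclideanSpace.norm_sq_eq, mul_sum]

lemma sum_norm_restrictFinset_mul_le [Fintype I] [DecidableEq I] {ι : Type*} (P : Finset ι)
    (S T : ι → Finset I) {C : ℕ} (hS : ∀ i, #{p ∈ P | i ∈ S p} ≤ C)
    (hT : ∀ i, #{p ∈ P | i ∈ T p} ≤ C) (y x : EuclideanSpace ℝ I) :
    ∑ p ∈ P, ‖restrictFinset (S p) y‖ * ‖restrictFinset (T p) x‖ ≤ C * ‖y‖ * ‖x‖ := by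
  calc ∑ p ∈ P, ‖restrictFinset (S p) y‖ * ‖restrictFinset (T p) x‖
      ≤ √(∑ p ∈ P, ‖restrictFinset (S p) y‖ ^ 2) * √(∑ p ∈ P, ‖restrictFinset (T p) x‖ ^ 2) :=
        Real.sum_mul_le_sqrt_mul_sqrt _ _ _
    _ ≤ √(C * ‖y‖ ^ 2) * √(C * ‖x‖ ^ 2) := by
        gcongr
        exacts [sum_norm_restrictFinset_sq_le P S hS y, sum_norm_restrictFinset_sq_le P T hT x]
    _ = C * ‖y‖ * ‖x‖ := by
        rw [← Real.sqrt_mul (by positivity), show (C : ℝ) * ‖y‖ ^ 2 * (C * ‖x‖ ^ 2)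
          = (C * ‖y‖ * ‖x‖) ^ 2 by ring, Real.sqrt_sq (by positivity)]

end EuclideanSpace

open EuclideanSpace

lemma sum_product_mul_apply_mul_le_submatrix {I : Type*} [DecidableEq I] (M : Matrix I I ℝ)
    (τ σ : Finset I) (y x : EuclideanSpace ℝ I) :
    ∑ q ∈ τ ×ˢ σ, y q.1 * M q.1 q.2 * x q.2 ≤
      matrixSpectralNorm (M.submatrix (fun a : τ => (a : I)) (fun b : σ => (b : I))) *
        ‖restrictFinset τ y‖ * ‖restrictFinset σ x‖ := by
  convert sum_mul_apply_mul_le_matrixSpectralNorm _ (restrictFinset τ y) (restrictFinset σ x)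
    using 1
  rw [sum_product, ← sum_coe_sort τ]
  simp_rw [← sum_coe_sort σ]
  rfl

/-- Single-level blockwise spectral norm bound: if the nonzero entries of `M` are covered
by pairwise disjoint rectangles `τ × σ`, and each index belongs to at most `C` row blocks
and at most `C` column blocks, then `‖M‖₂ ≤ C · max_{(τ,σ)} ‖M|_{τ×σ}‖₂`
(`sSup ∅ = 0` by convention). -/
theorem single_level_blockwise_norm_bound {I : Type*} [Fintype I] [DecidableEq I]
    (M : Matrix I I ℝ) (C : ℕ) (P : Finset (Finset I × Finset I))
    (hdisj : (P : Set (Finset I × Finset I)).PairwiseDisjoint (fun p => p.1 ×ˢ p.2))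
    (hcover : ∀ i j, M i j ≠ 0 → ∃ p ∈ P, i ∈ p.1 ∧ j ∈ p.2)
    (hrow : ∀ i : I, (P.filter (fun p => i ∈ p.1)).card ≤ C)
    (hcol : ∀ i : I, (P.filter (fun p => i ∈ p.2)).card ≤ C) :
    matrixSpectralNorm M ≤ C * sSup ((fun p : Finset I × Finset I =>
      matrixSpectralNorm (M.submatrix (fun a : ↥p.1 => (a : I)) (fun b : ↥p.2 => (b : I)))) ''
        (P : Set (Finset I × Finset I))) := by
  set B := sSup ((fun p : Finset I × Finset I =>
      matrixSpectralNorm (M.submatrix (fun a : ↥p.1 => (a : I)) (fun b : ↥p.2 => (b : I)))) ''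
        (P : Set (Finset I × Finset I)))
  have hB_nonneg : 0 ≤ B := Real.sSup_nonneg (by rintro _ ⟨p, -, rfl⟩; exact norm_nonneg _)
  have hB_le : ∀ p ∈ P, matrixSpectralNorm
      (M.submatrix (fun a : ↥p.1 => (a : I)) (fun b : ↥p.2 => (b : I))) ≤ B :=
    fun p hp => le_csSup ((P.finite_toSet.image _).bddAbove) ⟨p, hp, rfl⟩
  refine matrixSpectralNorm_le_of_sum_mul_apply_mul_le M (by positivity) fun y x => ?_
  calc ∑ i, ∑ j, y i * M i j * x j = ∑ q : I × I, y q.1 * M q.1 q.2 * x q.2 :=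
        (Fintype.sum_prod_type' _).symm
    _ = ∑ p ∈ P, ∑ q ∈ p.1 ×ˢ p.2, y q.1 * M q.1 q.2 * x q.2 :=
        Finset.sum_eq_sum_sum_of_pairwiseDisjoint P _ hdisj _ fun q hq => by
          simpa using hcover q.1 q.2 (right_ne_zero_of_mul (left_ne_zero_of_mul hq))
    _ ≤ ∑ p ∈ P, B * ‖restrictFinset p.1 y‖ * ‖restrictFinset p.2 x‖ := by
        gcongr with p hp
        exact (sum_product_mul_apply_mul_le_submatrix M p.1 p.2 y x).trans
          (by gcongr; exact hB_le p hp)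
    _ = B * ∑ p ∈ P, ‖restrictFinset p.1 y‖ * ‖restrictFinset p.2 x‖ := by
        simp only [mul_assoc, mul_sum]
    _ ≤ B * (C * ‖y‖ * ‖x‖) := by
        gcongr; exact sum_norm_restrictFinset_mul_le P Prod.fst Prod.snd hrow hcol y x
    _ = C * B * ‖y‖ * ‖x‖ := by ring
end

section
/- (Low-rank matrix approximation from a low-dimensional approximating subspace.) Let m, n be finite index sets, A a real m × n matrix, r ∈ ℕ, ε ≥ 0, and let W ⊆ (m → ℝ) be a linear subspace with dim W ≤ r such that for every vector b : n → ℝ there exists w ∈ W with ‖A·b − w‖ ≤ ε·‖b‖ (Euclidean norms). Then there exists a real m × n matrix M of rank at most r such that ‖A − M‖₂ ≤ ε. -/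
open Matrix

theorem Submodule.norm_sub_starProjection_le {𝕜 E : Type*} [RCLike 𝕜] [NormedAddCommGroup E]
    [InnerProductSpace 𝕜 E] (U : Submodule 𝕜 E) [U.HasOrthogonalProjection] (y : E) {w : E}
    (hw : w ∈ U) : ‖y - U.starProjection y‖ ≤ ‖y - w‖ := by
  rw [starProjection_minimal]
  exact ciInf_le ⟨0, Set.forall_mem_range.mpr fun _ => norm_nonneg _⟩ (⟨w, hw⟩ : U)

theorem Matrix.rank_eq_finrank_range_toLpLin {m n R : Type*} [Finite m] [Fintype n]
    [DecidableEq n] [CommRing R] [StrongRankCondition R] (p q : ENNReal) (A : Matrix m n R) :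
    A.rank = Module.finrank R (LinearMap.range (toLpLin p q A)) :=
  A.rank_eq_finrank_range_toLin (PiLp.basisFun q R m) (PiLp.basisFun p R n)

theorem matrixSpectralNorm_le_of_forall_norm_le {m n : Type*} [Fintype m] [Fintype n]
    [DecidableEq n] (M : Matrix m n ℝ) {ε : ℝ} (hε : 0 ≤ ε)
    (h : ∀ b, ‖toEuclideanLin M b‖ ≤ ε * ‖b‖) : matrixSpectralNorm M ≤ ε :=
  ContinuousLinearMap.opNorm_le_bound _ hε h

theorem low_rank_approx_from_subspace_general {m n : Type*}
    [Fintype m] [Fintype n] [DecidableEq n]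
    (A : Matrix m n ℝ) (r : ℕ) (ε : ℝ) (hε : 0 ≤ ε)
    (W : Submodule ℝ (EuclideanSpace ℝ m)) (hW : Module.finrank ℝ W ≤ r)
    (happrox : ∀ b : EuclideanSpace ℝ n,
      ∃ w ∈ W, ‖Matrix.toEuclideanLin A b - w‖ ≤ ε * ‖b‖) :
    ∃ M : Matrix m n ℝ, M.rank ≤ r ∧ matrixSpectralNorm (A - M) ≤ ε := by
  set M : Matrix m n ℝ := toEuclideanLin.symm (W.starProjection.toLinearMap ∘ₗ toEuclideanLin A)
  have hM : toEuclideanLin M = W.starProjection.toLinearMap ∘ₗ toEuclideanLin A :=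
    toEuclideanLin.apply_symm_apply _
  refine ⟨M, ?_, matrixSpectralNorm_le_of_forall_norm_le _ hε fun b => ?_⟩
  · have hrange : LinearMap.range (toEuclideanLin M) ≤ W := by
      rw [hM]
      exact (LinearMap.range_comp_le_range _ _).trans_eq W.range_starProjection
    rw [M.rank_eq_finrank_range_toLpLin]
    exact (Submodule.finrank_mono hrange).trans hW
  · obtain ⟨w, hwW, hw⟩ := happrox b
    rw [map_sub, LinearMap.sub_apply, hM]
    exact (W.norm_sub_starProjection_le _ hwW).trans hw

/-- Low-rank matrix approximation from a low-dimensional approximating subspace: if every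
matrix-vector product `A b` can be approximated from a subspace `W` of dimension at most `r`
with error `ε ‖b‖`, then `A` admits a rank-`r` approximation with spectral-norm error `ε`. -/
theorem low_rank_approx_from_subspace {m n : Type*}
    [Fintype m] [Fintype n] [DecidableEq m] [DecidableEq n]
    (A : Matrix m n ℝ) (r : ℕ) (ε : ℝ) (hε : 0 ≤ ε)
    (W : Submodule ℝ (EuclideanSpace ℝ m)) (hW : Module.finrank ℝ W ≤ r)
    (happrox : ∀ b : EuclideanSpace ℝ n,
      ∃ w ∈ W, ‖Matrix.toEuclideanLin A b - w‖ ≤ ε * ‖b‖) :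
    ∃ M : Matrix m n ℝ, M.rank ≤ r ∧ matrixSpectralNorm (A - M) ≤ ε :=
  low_rank_approx_from_subspace_general A r ε hε W hW happrox
end

section
/- (Invertibility of the saddle-point matrix.) Let N be a finite index set, W a real symmetric positive semidefinite N × N matrix, and B a nonzero real N × 1 matrix (column vector). Assume that the only vector x : N → ℝ satisfying both W·x = 0 and Bᵀ·x = 0 is x = 0. Then the saddle-point matrix 𝒲 := [[W, B],[Bᵀ, 0]] (a square matrix of size |N|+1, with 1 × 1 zero block) is invertible. -/
/-!
If `𝒲 (x, y) = 0` then `Bᴴ x = 0`, so pairing the first block row `W x + B y = 0` with `x`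
gives `xᴴ W x = 0`; positive semidefiniteness upgrades this to `W x = 0`. The kernel
condition then forces `x = 0`, and `B y = 0` forces `y = 0` because `B` has full column rank.
-/

open Matrix

section

open scoped ComplexOrder

variable {𝕜 n m : Type*} [RCLike 𝕜] [Fintype n] [Fintype m]

theorem Matrix.mulVec_eq_zero_of_fromBlocks_conjTranspose_mulVec_eq_zero
    {W : Matrix n n 𝕜} {B : Matrix n m 𝕜} (hW : W.PosSemidef)
    (hB : ∀ y : m → 𝕜, B *ᵥ y = 0 → y = 0)
    (hker : ∀ x : n → 𝕜, W *ᵥ x = 0 → Bᴴ *ᵥ x = 0 → x = 0)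
    {v : n ⊕ m → 𝕜} (hv : fromBlocks W B Bᴴ 0 *ᵥ v = 0) : v = 0 := by
  obtain ⟨x, y, rfl⟩ : ∃ x y, v = Sum.elim x y := ⟨_, _, (Sum.elim_comp_inl_inr v).symm⟩
  rw [fromBlocks_mulVec, Sum.elim_comp_inl, Sum.elim_comp_inr, zero_mulVec, add_zero,
    ← Sum.elim_zero_zero, Sum.elim_eq_iff] at hv
  obtain ⟨hrow, hBx⟩ := hv
  have hBy : star x ⬝ᵥ B *ᵥ y = 0 := by
    rw [dotProduct_mulVec, ← conjTranspose_conjTranspose B, ← star_mulVec, hBx, star_zero,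
      zero_dotProduct]
  have hWx : W *ᵥ x = 0 := by
    rw [← hW.dotProduct_mulVec_zero_iff]
    calc star x ⬝ᵥ W *ᵥ x = star x ⬝ᵥ (W *ᵥ x + B *ᵥ y) := by rw [dotProduct_add, hBy, add_zero]
      _ = 0 := by rw [hrow, dotProduct_zero]
  have hx : x = 0 := hker x hWx hBx
  have hy : y = 0 := hB y (by rwa [hWx, zero_add] at hrow)
  rw [hx, hy, Sum.elim_zero_zero]

theorem Matrix.isUnit_fromBlocks_conjTranspose [DecidableEq n] [DecidableEq m]
    {W : Matrix n n 𝕜} {B : Matrix n m 𝕜} (hW : W.PosSemidef)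
    (hB : ∀ y : m → 𝕜, B *ᵥ y = 0 → y = 0)
    (hker : ∀ x : n → 𝕜, W *ᵥ x = 0 → Bᴴ *ᵥ x = 0 → x = 0) :
    IsUnit (fromBlocks W B Bᴴ 0) := by
  rw [isUnit_iff_isUnit_det, isUnit_iff_ne_zero, Ne, ← exists_mulVec_eq_zero_iff]
  rintro ⟨v, hv0, hv⟩
  exact hv0 (mulVec_eq_zero_of_fromBlocks_conjTranspose_mulVec_eq_zero hW hB hker hv)

end

theorem Matrix.eq_zero_of_col_mulVec_eq_zero {n K : Type*} [NonUnitalNonAssocSemiring K] [NoZeroDivisors K] {B : Matrix n Unit K}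
    (hB : B ≠ 0) {y : Unit → K} (hy : B *ᵥ y = 0) : y = 0 := by
  ext ⟨⟩
  by_contra hy0
  refine hB (ext fun i _ => ?_)
  have hi : B i () * y () = 0 := by simpa [mulVec, dotProduct] using congrFun hy i
  exact (mul_eq_zero.mp hi).resolve_right hy0

/-- Invertibility of the saddle-point matrix: if `W` is symmetric positive semidefinite,
`B ≠ 0`, and the only vector in the kernel of `W` annihilated by `Bᵀ` is `0`, then the
saddle-point matrix `[[W, B],[Bᵀ, 0]]` is invertible. -/
theorem saddle_point_matrix_invertible {N : Type*} [Fintype N] [DecidableEq N]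
    (W : Matrix N N ℝ) (B : Matrix N Unit ℝ) (hB : B ≠ 0)
    (hW : W.PosSemidef)
    (hker : ∀ x : N → ℝ, W.mulVec x = 0 → Bᵀ.mulVec x = 0 → x = 0) :
    IsUnit (Matrix.fromBlocks W B Bᵀ (0 : Matrix Unit Unit ℝ)) := by
  rw [← conjTranspose_eq_transpose_of_trivial] at hker ⊢
  exact isUnit_fromBlocks_conjTranspose hW (fun _ => eq_zero_of_col_mulVec_eq_zero hB) hker
end
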